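/- arXiv:1805.00591 — 2 statements merged into one kernel-verified Lean document; each statement's English description precedes it below -/
import Mathlib

section
/- Let n ≥ 2, let a = (a_1, a_2, ā) ∈ ℝ^n satisfy a_1² + a_2² − ‖ā‖² = 1 and (a_1 + a_2)² − 2‖ā‖² = 1, and let μ > 0 and λ > 0. Set x = (√μ/√λ)·(a_1, a_2, −ā) and s = √μ·√λ·(a_1, a_2, ā). Then x ◇ s = μ·e. -/
noncomputable section

open Real Finset

/-- Euclidean dot product of two vectors in `ℝ^n`. -/
def dotp {n : ℕ} (x y : Fin n → ℝ) : ℝ := ∑ i, x i * y i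

/-- Euclidean norm of a vector in `ℝ^n`. -/
def enorm' {n : ℕ} (x : Fin n → ℝ) : ℝ := Real.sqrt (∑ i, (x i) ^ 2)

/-- The tail `x̄ = (x_3, …, x_n)` of a vector, embedded back into `ℝ^n`
(first two coordinates replaced by `0`). Indices are 0-based, so the tail
consists of the coordinates with index `≥ 2`. -/
def tl {n : ℕ} (x : Fin (n + 2) → ℝ) : Fin (n + 2) → ℝ :=
  fun i => if 2 ≤ (i : ℕ) then x i else 0

/-- The eigenvalue `λ1(x) = x_1 - x_2`. -/
def lam1 {n : ℕ} (x : Fin (n + 2) → ℝ) : ℝ := x 0 - x 1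

/-- The eigenvalue `λ2(x) = x_1 + x_2 - √2 ‖x̄‖`. -/
def lam2 {n : ℕ} (x : Fin (n + 2) → ℝ) : ℝ := x 0 + x 1 - Real.sqrt 2 * enorm' (tl x)

/-- The eigenvalue `λ4(x) = x_1 + x_2 + √2 ‖x̄‖`. -/
def lam4 {n : ℕ} (x : Fin (n + 2) → ℝ) : ℝ := x 0 + x 1 + Real.sqrt 2 * enorm' (tl x)

/-- The Jordan-type product `x ◇ s`. -/
def diam {n : ℕ} (x s : Fin (n + 2) → ℝ) : Fin (n + 2) → ℝ :=
  fun i =>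
    if (i : ℕ) = 0 then dotp x s
    else if (i : ℕ) = 1 then x 1 * s 0 + x 0 * s 1 + dotp (tl x) (tl s)
    else (s 0 + s 1) * x i + (x 0 + x 1) * s i

/-- The trace `Tr(x) = 2 x_1`. -/
def trace {n : ℕ} (x : Fin (n + 2) → ℝ) : ℝ := 2 * x 0

/-- `det̄(x) = (x_1 + x_2)² - 2 ‖x̄‖²`. -/
def detbar {n : ℕ} (x : Fin (n + 2) → ℝ) : ℝ := (x 0 + x 1) ^ 2 - 2 * (enorm' (tl x)) ^ 2

/-- `det(x) = x_1² + x_2² - ‖x̄‖²`. -/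
def det2 {n : ℕ} (x : Fin (n + 2) → ℝ) : ℝ := (x 0) ^ 2 + (x 1) ^ 2 - (enorm' (tl x)) ^ 2

/-- `det_(x) = 2 x_1 x_2 - ‖x̄‖²`. -/
def detund {n : ℕ} (x : Fin (n + 2) → ℝ) : ℝ := 2 * x 0 * x 1 - (enorm' (tl x)) ^ 2

/-- Membership in the type-2 second order cone `Υ^n`. -/
def inCone {n : ℕ} (x : Fin (n + 2) → ℝ) : Prop := 0 ≤ lam1 x ∧ 0 ≤ lam2 x

/-- Membership in the interior `Υ^n_+` of the type-2 second order cone. -/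
def inConeInt {n : ℕ} (x : Fin (n + 2) → ℝ) : Prop := 0 < lam1 x ∧ 0 < lam2 x

/-- The unit element `e = (1, 0, …, 0)`. -/
def eVec {n : ℕ} : Fin (n + 2) → ℝ := fun i => if (i : ℕ) = 0 then 1 else 0

/-- The spectral vector `g(x) = g(λ1(x)) v1 + g(λ2(x)) v2 + g(λ4(x)) v4`.
Its tail entries are `(g(λ4(x)) - g(λ2(x))) xᵢ / (2√2 ‖x̄‖)` when `x̄ ≠ 0`;
when `x̄ = 0` the written formula evaluates to `0` automatically since then
`xᵢ = 0` for `i ≥ 2`. -/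
def specVec {n : ℕ} (g : ℝ → ℝ) (x : Fin (n + 2) → ℝ) : Fin (n + 2) → ℝ :=
  fun i =>
    if (i : ℕ) = 0 then (1 / 2) * g (lam1 x) + (1 / 4) * g (lam2 x) + (1 / 4) * g (lam4 x)
    else if (i : ℕ) = 1 then -(1 / 2) * g (lam1 x) + (1 / 4) * g (lam2 x) + (1 / 4) * g (lam4 x)
    else (g (lam4 x) - g (lam2 x)) * x i / (2 * Real.sqrt 2 * enorm' (tl x))

/-- The barrier value `Ψ(x) = ψ(λ1(x)) + ½ψ(λ2(x)) + ½ψ(λ4(x))`. -/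
def Psi {n : ℕ} (g : ℝ → ℝ) (x : Fin (n + 2) → ℝ) : ℝ :=
  g (lam1 x) + (1 / 2) * g (lam2 x) + (1 / 2) * g (lam4 x)

/-- The barrier value of a block vector. -/
def PsiBlk {N : ℕ} {nf : Fin N → ℕ} (g : ℝ → ℝ) (v : ∀ j, Fin (nf j + 2) → ℝ) : ℝ :=
  ∑ j, Psi g (v j)

/-- The norm-based proximity `δ(v) = (1/√2) (Σⱼ ‖ψ'(vʲ)‖²)^{1/2}`. -/
def deltaBlk {N : ℕ} {nf : Fin N → ℕ} (g : ℝ → ℝ) (v : ∀ j, Fin (nf j + 2) → ℝ) : ℝ :=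
  (1 / Real.sqrt 2) * Real.sqrt (∑ j, (enorm' (specVec g (v j))) ^ 2)

/-- `λ_min(v) = minⱼ min{λ1(vʲ), λ2(vʲ)}`. -/
def lamMin {N : ℕ} {nf : Fin N → ℕ} (v : ∀ j, Fin (nf j + 2) → ℝ) : ℝ :=
  ⨅ j, min (lam1 (v j)) (lam2 (v j))

/-- if `det(a) = 1`, `det̄(a) = 1`, `μ > 0`, `λ > 0`, and
`x = (√μ/√λ)(a_1, a_2, -ā)`, `s = √μ√λ(a_1, a_2, ā)`, then `x ◇ s = μ e`. -/
theorem stmt11 (n : ℕ) (a : Fin (n + 2) → ℝ)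
    (h1 : (a 0) ^ 2 + (a 1) ^ 2 - (enorm' (tl a)) ^ 2 = 1)
    (h2 : (a 0 + a 1) ^ 2 - 2 * (enorm' (tl a)) ^ 2 = 1)
    (μ lam : ℝ) (hμ : 0 < μ) (hlam : 0 < lam) :
    diam ((Real.sqrt μ / Real.sqrt lam) •
            (fun i => if (i : ℕ) < 2 then a i else -a i : Fin (n + 2) → ℝ))
         ((Real.sqrt μ * Real.sqrt lam) • a) = μ • eVec := by
  have hsq : (enorm' (tl a)) ^ 2 = ∑ i, (tl a i) ^ 2 := by
    rw [enorm', Real.sq_sqrt]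
    positivity
  have hcd : Real.sqrt μ / Real.sqrt lam * (Real.sqrt μ * Real.sqrt lam) = μ := by
    have hl : Real.sqrt lam ≠ 0 := ne_of_gt (Real.sqrt_pos.mpr hlam)
    have : Real.sqrt μ / Real.sqrt lam * (Real.sqrt μ * Real.sqrt lam)
        = Real.sqrt μ * Real.sqrt μ * (Real.sqrt lam / Real.sqrt lam) := by ring
    rw [this, div_self hl, mul_one, Real.mul_self_sqrt hμ.le]
  set c := Real.sqrt μ / Real.sqrt lam with hc
  set d := Real.sqrt μ * Real.sqrt lam with hd
  funext i
  simp only [diam, eVec, Pi.smul_apply, smul_eq_mul]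
  by_cases hi0 : (i : ℕ) = 0
  · simp only [hi0, if_pos rfl]
    have key : dotp (c • (fun i => if (i : ℕ) < 2 then a i else -a i : Fin (n + 2) → ℝ))
        (d • a) = c * d * ((∑ j : Fin (n+2), (if (j : ℕ) < 2 then a j ^ 2 else 0)) - ∑ j, (tl a j) ^ 2) := by
      rw [dotp, ← Finset.sum_sub_distrib, Finset.mul_sum]
      apply Finset.sum_congr rfl
      intro j _
      simp only [Pi.smul_apply, smul_eq_mul, tl]
      by_cases hj : (j : ℕ) < 2
      · have : ¬ 2 ≤ (j : ℕ) := by omega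
        simp [hj, this]; ring
      · have : 2 ≤ (j : ℕ) := by omega
        simp [hj, this]; ring
    rw [key]
    have hs2 : (∑ j : Fin (n + 2), (if (j : ℕ) < 2 then a j ^ 2 else 0)) = a 0 ^ 2 + a 1 ^ 2 := by
      rw [Fin.sum_univ_succ, Fin.sum_univ_succ]
      have hz : (∑ x : Fin n, if ((x.succ.succ : Fin (n+2)) : ℕ) < 2 then a x.succ.succ ^ 2 else 0) = 0 := by
        apply Finset.sum_eq_zero
        intro x _
        have hx : ¬ ((x : ℕ) + 1 + 1 < 2) := by omega
        simp [Fin.val_succ, hx]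
      rw [hz]
      simp
    rw [hs2, ← hsq, h1, hcd]; simp
  · by_cases hi1 : (i : ℕ) = 1
    · simp only [hi0, hi1, if_neg, if_pos rfl]
      have ht : dotp (tl (c • (fun i => if (i : ℕ) < 2 then a i else -a i : Fin (n + 2) → ℝ)))
          (tl (d • a)) = -(c * d) * ∑ j, (tl a j) ^ 2 := by
        rw [dotp, Finset.mul_sum]
        apply Finset.sum_congr rfl
        intro j _
        simp only [Pi.smul_apply, smul_eq_mul, tl]
        by_cases hj : 2 ≤ (j : ℕ)
        · have : ¬ (j : ℕ) < 2 := by omega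
          simp [hj, this]; ring
        · simp [hj]
      have h01 : ((1:ℕ) < 2) := by norm_num
      have h00 : ((0:ℕ) < 2) := by norm_num
      have hab : 2 * a 0 * a 1 - (enorm' (tl a)) ^ 2 = 0 := by nlinarith [h1, h2]
      simp only [ht]
      have hv1 : ((1 : Fin (n+2)) : ℕ) = 1 := rfl
      have hv0 : ((0 : Fin (n+2)) : ℕ) = 0 := rfl
      simp only [hv0, hv1, if_pos h00, if_pos h01]
      rw [← hsq]
      have : c * (a 1) * (d * a 0) + c * (a 0) * (d * a 1) + -(c * d) * (enorm' (tl a)) ^ 2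
          = c * d * (2 * a 0 * a 1 - (enorm' (tl a)) ^ 2) := by ring
      rw [this, hab, mul_zero]
      simp [hi1]
    · have hi2 : 2 ≤ (i : ℕ) := by omega
      have hni : ¬ (i : ℕ) < 2 := by omega
      simp only [hi0, hi1, if_neg, if_false]
      have hv1 : ((1 : Fin (n+2)) : ℕ) = 1 := rfl
      have hv0 : ((0 : Fin (n+2)) : ℕ) = 0 := rfl
      simp only [hv0, hv1]
      norm_num [hni]
      ring

end
end

section
/- Let ψ : ℝ → ℝ be twice continuously differentiable on (0,∞) with ψ''(t) > 0 for all t > 0 and ψ'' monotonically decreasing on (0,∞). Let N ≥ 1, let n_1, …, n_N ≥ 2, let v = (v^1, …, v^N) with each v^j ∈ Υ^{n_j}_+, and let d_x = (d_x^1, …, d_x^N) and d_s = (d_s^1, …, d_s^N) be block vectors satisfying Σ_j ⟨d_x^j, d_s^j⟩ = 0 and d_x^j + d_s^j = −ψ'(v^j) (the spectral vector) for every j. Define f_1(α) = Σ_j [(1/2)Ψ(v^j + α d_x^j) + (1/2)Ψ(v^j + α d_s^j)] − Ψ(v). Let α ≥ 0 satisfy λ_min(v) − 2√2·α·δ(v)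 > 0, and assume that for every j with n_j ≥ 3 the tail vectors (components 3 through n_j) of v^j + α d_x^j and of v^j + α d_s^j are nonzero. Then f_1 is twice differentiable at α and f_1''(α) ≤ 2·δ(v)²·ψ''(λ_min(v) − 2√2·α·δ(v)). -/
noncomputable section

open Real Finset

lemma mvt_bound (f' f'' : ℝ → ℝ)
    (hd2 : ∀ t > (0:ℝ), HasDerivAt f' (f'' t) t)
    (hdec : AntitoneOn f'' (Set.Ioi 0)) (m x y : ℝ)
    (hm : 0 < m) (hx : m ≤ x) (hxy : x ≤ y) :
    f' y - f' x ≤ f'' m * (y - x) := by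
  rcases eq_or_lt_of_le hxy with rfl | h
  · simp
  · obtain ⟨c, hc, hceq⟩ := exists_hasDerivAt_eq_slope f' f'' h
      (fun t ht => ((hd2 t (lt_of_lt_of_le hm (hx.trans ht.1))).continuousAt).continuousWithinAt)
      (fun t ht => hd2 t (lt_of_lt_of_le hm (hx.trans ht.1.le)))
    have hcm : f'' c ≤ f'' m :=
      hdec (Set.mem_Ioi.2 hm) (Set.mem_Ioi.2 (hm.trans_le (hx.trans hc.1.le)))
        (hx.trans hc.1.le)
    rw [eq_div_iff (by linarith : y - x ≠ 0)] at hceq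
    have : f' y - f' x = f'' c * (y - x) := hceq.symm
    rw [this]
    exact mul_le_mul_of_nonneg_right hcm (by linarith)

set_option maxHeartbeats 1000000 in
lemma core (f f' f'' : ℝ → ℝ)
    (hd1 : ∀ t > (0:ℝ), HasDerivAt f (f' t) t)
    (hd2 : ∀ t > (0:ℝ), HasDerivAt f' (f'' t) t)
    (hdec : AntitoneOn f'' (Set.Ioi 0))
    (c1 b1 a b C m α : ℝ)
    (n np : ℝ → ℝ) (npp : ℝ)
    (hn0 : 0 ≤ n α)
    (hnd : ∀ᶠ t in nhds α, HasDerivAt n (np t) t)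
    (hnd2 : HasDerivAt np npp α)
    (hnp : np α ^ 2 ≤ C)
    (hnppe : n α * npp = C - np α ^ 2)
    (hnppn : 0 ≤ npp)
    (hm : 0 < m)
    (hm1 : m ≤ c1 + b1 * α)
    (hm2 : m ≤ a + b * α - Real.sqrt 2 * n α) :
    ∃ G K,
      (∀ᶠ t in nhds α, HasDerivAt (fun t => f (c1 + b1 * t)
          + (1/2) * f (a + b * t - Real.sqrt 2 * n t)
          + (1/2) * f (a + b * t + Real.sqrt 2 * n t)) (G t) t)
      ∧ HasDerivAt G K α ∧ K ≤ (b1 ^ 2 + b ^ 2 + 2 * C) * f'' m := by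
  have s2 : (0:ℝ) ≤ Real.sqrt 2 := Real.sqrt_nonneg 2
  set L1 : ℝ → ℝ := fun t => c1 + b1 * t with hL1def
  set L2 : ℝ → ℝ := fun t => a + b * t - Real.sqrt 2 * n t with hL2def
  set L4 : ℝ → ℝ := fun t => a + b * t + Real.sqrt 2 * n t with hL4def
  have hL2α : m ≤ L2 α := hm2
  have hL4α : m ≤ L4 α := by
    have : L2 α ≤ L4 α := by simp only [hL2def, hL4def]; nlinarith
    linarith
  -- continuity of n at α
  have hnc : ContinuousAt n α := (hnd.self_of_nhds).continuousAt
  have hL1c : ContinuousAt L1 α := by fun_prop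
  have hL2c : ContinuousAt L2 α := by
    exact ((continuousAt_const.add (continuousAt_id.const_mul b)).sub (hnc.const_mul _))
  have hL4c : ContinuousAt L4 α := by
    exact ((continuousAt_const.add (continuousAt_id.const_mul b)).add (hnc.const_mul _))
  have hE1 : ∀ᶠ t in nhds α, 0 < L1 t := hL1c.eventually (eventually_gt_nhds (lt_of_lt_of_le hm hm1))
  have hE2 : ∀ᶠ t in nhds α, 0 < L2 t := hL2c.eventually (eventually_gt_nhds (lt_of_lt_of_le hm hL2α))
  have hE4 : ∀ᶠ t in nhds α, 0 < L4 t := hL4c.eventually (eventually_gt_nhds (lt_of_lt_of_le hm hL4α))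
  set G : ℝ → ℝ := fun t => f' (L1 t) * b1
      + (1/2) * (f' (L2 t) * (b - Real.sqrt 2 * np t))
      + (1/2) * (f' (L4 t) * (b + Real.sqrt 2 * np t)) with hGdef
  have key : ∀ t, HasDerivAt n (np t) t → 0 < L1 t → 0 < L2 t → 0 < L4 t →
      HasDerivAt (fun t => f (c1 + b1 * t)
          + (1/2) * f (a + b * t - Real.sqrt 2 * n t)
          + (1/2) * f (a + b * t + Real.sqrt 2 * n t)) (G t) t := by
    intro t hnt h1 h2 h4
    have hL1d : HasDerivAt L1 b1 t := by
      exact (((hasDerivAt_id t).const_mul b1).const_add c1).congr_deriv (mul_one b1)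
    have hlin : HasDerivAt (fun t => a + b * t) b t := by
      simpa using ((hasDerivAt_id t).const_mul b).const_add a
    have hL2d : HasDerivAt L2 (b - Real.sqrt 2 * np t) t := hlin.sub (hnt.const_mul _)
    have hL4d : HasDerivAt L4 (b + Real.sqrt 2 * np t) t := hlin.add (hnt.const_mul _)
    have h1' := ((hd1 _ h1).comp t hL1d)
    have h2' := (((hd1 _ h2).comp t hL2d).const_mul (1/2 : ℝ))
    have h4' := (((hd1 _ h4).comp t hL4d).const_mul (1/2 : ℝ))
    exact (h1'.add h2').add h4'
  have hEvG : ∀ᶠ t in nhds α, HasDerivAt (fun t => f (c1 + b1 * t)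
          + (1/2) * f (a + b * t - Real.sqrt 2 * n t)
          + (1/2) * f (a + b * t + Real.sqrt 2 * n t)) (G t) t := by
    filter_upwards [hnd, hE1, hE2, hE4] with t hnt h1 h2 h4 using key t hnt h1 h2 h4
  -- derivative of G at α
  have h1α : 0 < L1 α := lt_of_lt_of_le hm hm1
  have h2α : 0 < L2 α := lt_of_lt_of_le hm hL2α
  have h4α : 0 < L4 α := lt_of_lt_of_le hm hL4α
  have hnα : HasDerivAt n (np α) α := hnd.self_of_nhds
  have hL1d : HasDerivAt L1 b1 α := by
    exact (((hasDerivAt_id α).const_mul b1).const_add c1).congr_deriv (mul_one b1)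
  have hlin : HasDerivAt (fun t => a + b * t) b α := by
    simpa using ((hasDerivAt_id α).const_mul b).const_add a
  have hL2d : HasDerivAt L2 (b - Real.sqrt 2 * np α) α := hlin.sub (hnα.const_mul _)
  have hL4d : HasDerivAt L4 (b + Real.sqrt 2 * np α) α := hlin.add (hnα.const_mul _)
  have hf2 : HasDerivAt (fun t => f' (L2 t)) (f'' (L2 α) * (b - Real.sqrt 2 * np α)) α :=
    (hd2 _ h2α).comp α hL2d
  have hf4 : HasDerivAt (fun t => f' (L4 t)) (f'' (L4 α) * (b + Real.sqrt 2 * np α)) α :=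
    (hd2 _ h4α).comp α hL4d
  have hf1 : HasDerivAt (fun t => f' (L1 t)) (f'' (L1 α) * b1) α := (hd2 _ h1α).comp α hL1d
  have hc2 : HasDerivAt (fun t => (b - Real.sqrt 2 * np t)) (-(Real.sqrt 2 * npp)) α := by
    exact ((hasDerivAt_const α b).sub (hnd2.const_mul (Real.sqrt 2))).congr_deriv (zero_sub _)
  have hc4 : HasDerivAt (fun t => (b + Real.sqrt 2 * np t)) (Real.sqrt 2 * npp) α := by
    exact ((hasDerivAt_const α b).add (hnd2.const_mul (Real.sqrt 2))).congr_deriv (zero_add _)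
  set K : ℝ := (f'' (L1 α) * b1) * b1
      + (1/2) * ((f'' (L2 α) * (b - Real.sqrt 2 * np α)) * (b - Real.sqrt 2 * np α)
          + f' (L2 α) * (-(Real.sqrt 2 * npp)))
      + (1/2) * ((f'' (L4 α) * (b + Real.sqrt 2 * np α)) * (b + Real.sqrt 2 * np α)
          + f' (L4 α) * (Real.sqrt 2 * npp)) with hKdef
  have hGd : HasDerivAt G K α := by
    exact ((hf1.mul_const b1).add ((hf2.mul hc2).const_mul _)).add ((hf4.mul hc4).const_mul _)
  refine ⟨G, K, hEvG, hGd, ?_⟩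
  -- the bound
  have hb1 : f'' (L1 α) ≤ f'' m := hdec (Set.mem_Ioi.2 hm) (Set.mem_Ioi.2 h1α) hm1
  have hb2 : f'' (L2 α) ≤ f'' m := hdec (Set.mem_Ioi.2 hm) (Set.mem_Ioi.2 h2α) hL2α
  have hb4 : f'' (L4 α) ≤ f'' m := hdec (Set.mem_Ioi.2 hm) (Set.mem_Ioi.2 h4α) hL4α
  have hmvt : f' (L4 α) - f' (L2 α) ≤ f'' m * (L4 α - L2 α) :=
    mvt_bound f' f'' hd2 hdec m (L2 α) (L4 α) hm hL2α (by simp only [hL2def, hL4def]; nlinarith)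
  have hdiff : L4 α - L2 α = 2 * Real.sqrt 2 * n α := by simp only [hL2def, hL4def]; ring
  have hs2sq : Real.sqrt 2 ^ 2 = 2 := Real.sq_sqrt (by norm_num)
  rw [hKdef]
  have e1 : (f'' (L1 α) * b1) * b1 ≤ f'' m * b1 ^ 2 := by nlinarith [sq_nonneg b1]
  have e2 : (f'' (L2 α) * (b - Real.sqrt 2 * np α)) * (b - Real.sqrt 2 * np α)
      ≤ f'' m * (b - Real.sqrt 2 * np α) ^ 2 := by nlinarith [sq_nonneg (b - Real.sqrt 2 * np α)]
  have e4 : (f'' (L4 α) * (b + Real.sqrt 2 * np α)) * (b + Real.sqrt 2 * np α)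
      ≤ f'' m * (b + Real.sqrt 2 * np α) ^ 2 := by nlinarith [sq_nonneg (b + Real.sqrt 2 * np α)]
  have hsqrt2 : Real.sqrt 2 * Real.sqrt 2 = 2 := Real.mul_self_sqrt (by norm_num)
  have ecurv : (1/2) * (f' (L4 α) * (Real.sqrt 2 * npp)) + (1/2) * (f' (L2 α) * (-(Real.sqrt 2 * npp)))
      ≤ f'' m * (2 * C - 2 * np α ^ 2) := by
    have h := mul_le_mul_of_nonneg_right hmvt (mul_nonneg s2 hnppn)
    rw [hdiff] at h
    have h4 : f'' m * (2 * Real.sqrt 2 * n α) * (Real.sqrt 2 * npp)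
        = 4 * (f'' m * (C - np α ^ 2)) := by
      linear_combination (2 * f'' m * (n α * npp)) * hsqrt2 + (4 * f'' m) * hnppe
    nlinarith [h, h4]
  have eid : f'' m * b1 ^ 2 + (1/2) * (f'' m * (b - Real.sqrt 2 * np α) ^ 2)
      + (1/2) * (f'' m * (b + Real.sqrt 2 * np α) ^ 2) + f'' m * (2 * C - 2 * np α ^ 2)
      = (b1 ^ 2 + b ^ 2 + 2 * C) * f'' m := by
    linear_combination (f'' m * np α ^ 2) * hsqrt2
  linarith [e1, e2, e4, ecurv, eid]

lemma sqrt_line (A B C α : ℝ) (hA : 0 ≤ A) (hC : 0 ≤ C) (hCS : B ^ 2 ≤ A * C)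
    (hq : (A = 0 ∧ B = 0 ∧ C = 0) ∨ 0 < A + 2*B*α + C*α^2) :
    ∃ np : ℝ → ℝ, ∃ npp : ℝ,
      (∀ᶠ t in nhds α, HasDerivAt (fun t => Real.sqrt (A + 2*B*t + C*t^2)) (np t) t)
      ∧ HasDerivAt np npp α
      ∧ np α ^ 2 ≤ C
      ∧ Real.sqrt (A + 2*B*α + C*α^2) * npp = C - np α ^ 2
      ∧ 0 ≤ npp := by
  rcases hq with ⟨h1, h2, h3⟩ | hpos
  · refine ⟨fun _ => 0, 0, ?_, hasDerivAt_const α 0, by simpa using hC, by simp [h1, h2, h3], le_refl 0⟩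
    have he : (fun t => Real.sqrt (A + 2*B*t + C*t^2)) = fun _ => (0:ℝ) := by
      funext t; simp [h1, h2, h3]
    rw [he]
    exact Filter.Eventually.of_forall fun t => hasDerivAt_const t 0
  · have hqc : Continuous (fun t : ℝ => A + 2*B*t + C*t^2) := by fun_prop
    have hev : ∀ᶠ t in nhds α, 0 < A + 2*B*t + C*t^2 :=
      (hqc.continuousAt).eventually (eventually_gt_nhds hpos)
    have key : ∀ t, 0 < A + 2*B*t + C*t^2 → HasDerivAt (fun t => Real.sqrt (A + 2*B*t + C*t^2))
        ((B + C*t) / Real.sqrt (A + 2*B*t + C*t^2)) t := by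
      intro t hqt
      have hs : 0 < Real.sqrt (A + 2*B*t + C*t^2) := Real.sqrt_pos.2 hqt
      have hq' : HasDerivAt (fun t : ℝ => A + 2*B*t + C*t^2) (2*B + C*(2*t)) t := by
        exact ((((hasDerivAt_id t).const_mul (2*B)).const_add A).add
          ((hasDerivAt_pow 2 t).const_mul C)).congr_deriv (by norm_num)
      have h := (Real.hasDerivAt_sqrt hqt.ne').comp t hq'
      refine h.congr_deriv ?_
      field_simp
    have hsα : 0 < Real.sqrt (A + 2*B*α + C*α^2) := Real.sqrt_pos.2 hpos
    have hsq : Real.sqrt (A + 2*B*α + C*α^2) ^ 2 = A + 2*B*α + C*α^2 := Real.sq_sqrt hpos.le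
    have hnpsq : ((B + C*α) / Real.sqrt (A + 2*B*α + C*α^2)) ^ 2 ≤ C := by
      rw [div_pow, hsq, div_le_iff₀ hpos]
      nlinarith [hCS]
    refine ⟨fun t => (B + C*t) / Real.sqrt (A + 2*B*t + C*t^2),
      (C - ((B + C*α) / Real.sqrt (A + 2*B*α + C*α^2)) ^ 2) / Real.sqrt (A + 2*B*α + C*α^2),
      ?_, ?_, hnpsq, ?_, ?_⟩
    · filter_upwards [hev] with t ht using key t ht
    · have hnum : HasDerivAt (fun t => B + C*t) C α := by
        simpa using ((hasDerivAt_id α).const_mul C).const_add B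
      have hden : HasDerivAt (fun t => Real.sqrt (A + 2*B*t + C*t^2))
          ((B + C*α) / Real.sqrt (A + 2*B*α + C*α^2)) α := key α hpos
      have h := hnum.div hden hsα.ne'
      refine h.congr_deriv (Eq.symm ?_)
      generalize Real.sqrt (A + 2*B*α + C*α^2) = s at hsα ⊢
      field_simp
    · exact mul_div_cancel₀ _ hsα.ne'
    · exact div_nonneg (by linarith [hnpsq]) (Real.sqrt_nonneg _)

lemma le_of_sq_le_sq' (x s : ℝ) (h : x ^ 2 ≤ s ^ 2) (hs : 0 ≤ s) : x ≤ s := by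
  calc x ≤ |x| := le_abs_self x
  _ = Real.sqrt (x ^ 2) := (Real.sqrt_sq_eq_abs x).symm
  _ ≤ Real.sqrt (s ^ 2) := Real.sqrt_le_sqrt h
  _ = s := Real.sqrt_sq hs

lemma sum_split {n : ℕ} (g : Fin (n + 2) → ℝ) :
    ∑ i, g i = g 0 + g 1 + ∑ i : Fin n, g ⟨(i : ℕ) + 2, by omega⟩ := by
  rw [Fin.sum_univ_succ, Fin.sum_univ_succ, ← add_assoc, Fin.succ_zero_eq_one]
  refine congrArg _ (Finset.sum_congr rfl fun i _ => congrArg g (Fin.ext ?_))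
  simp [Fin.val_succ]

lemma tl_zero0 {n : ℕ} (x : Fin (n + 2) → ℝ) : tl x 0 = 0 := by simp [tl]

lemma tl_zero1 {n : ℕ} (x : Fin (n + 2) → ℝ) : tl x 1 = 0 := by simp [tl]

lemma tl_tail {n : ℕ} (x : Fin (n + 2) → ℝ) (i : Fin n) :
    tl x ⟨(i : ℕ) + 2, by omega⟩ = x ⟨(i : ℕ) + 2, by omega⟩ := by simp [tl]

lemma sum_sq_split {n : ℕ} (d : Fin (n + 2) → ℝ) :
    ∑ i, d i ^ 2 = d 0 ^ 2 + d 1 ^ 2 + ∑ i, (tl d i) ^ 2 := by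
  rw [sum_split (fun i => d i ^ 2), sum_split (fun i => (tl d i) ^ 2),
    tl_zero0, tl_zero1]
  simp only [tl_tail]
  ring

lemma sum_tail_expand {n : ℕ} (v d : Fin (n + 2) → ℝ) (t : ℝ) :
    ∑ i, (tl (v + t • d) i) ^ 2
      = (∑ i, (tl v i) ^ 2) + 2 * (∑ i, tl v i * tl d i) * t + (∑ i, (tl d i) ^ 2) * t ^ 2 := by
  have h : ∀ i : Fin (n + 2), (tl (v + t • d) i) ^ 2
      = (tl v i) ^ 2 + (2 * t) * (tl v i * tl d i) + t ^ 2 * (tl d i) ^ 2 := by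
    intro i
    simp only [tl, Pi.add_apply, Pi.smul_apply, smul_eq_mul]
    split <;> ring
  rw [Finset.sum_congr rfl (fun i _ => h i), Finset.sum_add_distrib, Finset.sum_add_distrib,
    ← Finset.mul_sum, ← Finset.mul_sum]
  ring

lemma psi_line {n : ℕ} (f : ℝ → ℝ) (v d : Fin (n + 2) → ℝ) (t : ℝ) :
    Psi f (v + t • d)
      = f ((v 0 - v 1) + (d 0 - d 1) * t)
        + (1/2) * f ((v 0 + v 1) + (d 0 + d 1) * t
            - Real.sqrt 2 * Real.sqrt ((∑ i, (tl v i) ^ 2)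
                + 2 * (∑ i, tl v i * tl d i) * t + (∑ i, (tl d i) ^ 2) * t ^ 2))
        + (1/2) * f ((v 0 + v 1) + (d 0 + d 1) * t
            + Real.sqrt 2 * Real.sqrt ((∑ i, (tl v i) ^ 2)
                + 2 * (∑ i, tl v i * tl d i) * t + (∑ i, (tl d i) ^ 2) * t ^ 2)) := by
  have he : enorm' (tl (v + t • d)) = Real.sqrt ((∑ i, (tl v i) ^ 2)
      + 2 * (∑ i, tl v i * tl d i) * t + (∑ i, (tl d i) ^ 2) * t ^ 2) := by
    rw [enorm', sum_tail_expand]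
  rw [Psi, lam1, lam2, lam4, he]
  simp only [Pi.add_apply, Pi.smul_apply, smul_eq_mul]
  rw [show v 0 + t * d 0 - (v 1 + t * d 1) = (v 0 - v 1) + (d 0 - d 1) * t by ring,
    show v 0 + t * d 0 + (v 1 + t * d 1) = (v 0 + v 1) + (d 0 + d 1) * t by ring]

set_option maxHeartbeats 1000000 in
lemma block_pkg (f f' f'' : ℝ → ℝ)
    (hd1 : ∀ t > (0:ℝ), HasDerivAt f (f' t) t)
    (hd2 : ∀ t > (0:ℝ), HasDerivAt f' (f'' t) t)
    (hdec : AntitoneOn f'' (Set.Ioi 0))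
    {k : ℕ} (v d : Fin (k + 2) → ℝ) (α m δ : ℝ)
    (hα : 0 ≤ α) (hδ0 : 0 ≤ δ) (hm : 0 < m)
    (hlam1 : m + 2 * Real.sqrt 2 * α * δ ≤ lam1 v)
    (hlam2 : m + 2 * Real.sqrt 2 * α * δ ≤ lam2 v)
    (hd2sum : ∑ i, d i ^ 2 ≤ 2 * δ ^ 2)
    (hq : k = 0 ∨ tl (v + α • d) ≠ 0) :
    ∃ G K, (∀ᶠ t in nhds α, HasDerivAt (fun t => Psi f (v + t • d)) (G t) t)
      ∧ HasDerivAt G K α ∧ K ≤ (2 * ∑ i, d i ^ 2) * f'' m := by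
  have hsqrt2 : Real.sqrt 2 * Real.sqrt 2 = 2 := Real.mul_self_sqrt (by norm_num)
  have s2 : (0:ℝ) ≤ Real.sqrt 2 := Real.sqrt_nonneg 2
  have hA : (0:ℝ) ≤ ∑ i, (tl v i) ^ 2 := Finset.sum_nonneg fun i _ => sq_nonneg _
  have hC : (0:ℝ) ≤ ∑ i, (tl d i) ^ 2 := Finset.sum_nonneg fun i _ => sq_nonneg _
  have hCS : (∑ i, tl v i * tl d i) ^ 2 ≤ (∑ i, (tl v i) ^ 2) * ∑ i, (tl d i) ^ 2 :=
    Finset.sum_mul_sq_le_sq_mul_sq _ _ _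
  have hCeq : d 0 ^ 2 + d 1 ^ 2 + (∑ i, (tl d i) ^ 2) = ∑ i, d i ^ 2 :=
    (sum_sq_split d).symm
  have hqcase : ((∑ i, (tl v i) ^ 2) = 0 ∧ (∑ i, tl v i * tl d i) = 0 ∧ (∑ i, (tl d i) ^ 2) = 0)
      ∨ 0 < (∑ i, (tl v i) ^ 2) + 2 * (∑ i, tl v i * tl d i) * α + (∑ i, (tl d i) ^ 2) * α ^ 2 := by
    rcases hq with hk | hne
    · left
      subst hk
      have hz : ∀ (x : Fin 2 → ℝ) (i : Fin 2), tl x i = 0 := by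
        intro x i
        have : (i : ℕ) < 2 := i.isLt
        simp only [tl]
        rw [if_neg (by omega)]
      refine ⟨?_, ?_, ?_⟩ <;> simp [hz]
    · right
      rw [← sum_tail_expand]
      obtain ⟨i, hi⟩ := Function.ne_iff.1 hne
      exact Finset.sum_pos' (fun i _ => sq_nonneg _)
        ⟨i, Finset.mem_univ i, (sq_nonneg _).lt_of_ne (Ne.symm (pow_ne_zero 2 hi))⟩
  obtain ⟨np, npp, h1, h2, h3, h4, h5⟩ := sqrt_line _ _ _ α hA hC hCS hqcase
  -- first two coordinate bounds
  have h01 : d 0 ^ 2 + d 1 ^ 2 ≤ 2 * δ ^ 2 := by nlinarith [hC]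
  have hm1 : m ≤ (v 0 - v 1) + (d 0 - d 1) * α := by
    have hx : d 1 - d 0 ≤ 2 * Real.sqrt 2 * δ := by
      apply le_of_sq_le_sq' _ _ _ (by positivity)
      nlinarith [hsqrt2, h01, sq_nonneg (d 0 + d 1)]
    have := mul_le_mul_of_nonneg_left hx hα
    have hl1 : lam1 v = v 0 - v 1 := rfl
    nlinarith [hlam1]
  have hm2 : m ≤ (v 0 + v 1) + (d 0 + d 1) * α
      - Real.sqrt 2 * Real.sqrt ((∑ i, (tl v i) ^ 2)
          + 2 * (∑ i, tl v i * tl d i) * α + (∑ i, (tl d i) ^ 2) * α ^ 2) := by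
    have hsC : Real.sqrt (∑ i, (tl d i) ^ 2) ^ 2 = ∑ i, (tl d i) ^ 2 := Real.sq_sqrt hC
    have hsA : Real.sqrt (∑ i, (tl v i) ^ 2) ^ 2 = ∑ i, (tl v i) ^ 2 := Real.sq_sqrt hA
    have hBle : (∑ i, tl v i * tl d i)
        ≤ Real.sqrt (∑ i, (tl v i) ^ 2) * Real.sqrt (∑ i, (tl d i) ^ 2) := by
      apply le_of_sq_le_sq' _ _ _ (by positivity)
      nlinarith [hCS, hsA, hsC]
    have hroot : Real.sqrt ((∑ i, (tl v i) ^ 2)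
          + 2 * (∑ i, tl v i * tl d i) * α + (∑ i, (tl d i) ^ 2) * α ^ 2)
        ≤ Real.sqrt (∑ i, (tl v i) ^ 2) + α * Real.sqrt (∑ i, (tl d i) ^ 2) := by
      have hle : (∑ i, (tl v i) ^ 2) + 2 * (∑ i, tl v i * tl d i) * α + (∑ i, (tl d i) ^ 2) * α ^ 2
          ≤ (Real.sqrt (∑ i, (tl v i) ^ 2) + α * Real.sqrt (∑ i, (tl d i) ^ 2)) ^ 2 := by
        nlinarith [mul_le_mul_of_nonneg_left hBle (by linarith : (0:ℝ) ≤ 2 * α), hsA, hsC]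
      calc Real.sqrt _ ≤ Real.sqrt ((Real.sqrt (∑ i, (tl v i) ^ 2)
            + α * Real.sqrt (∑ i, (tl d i) ^ 2)) ^ 2) := Real.sqrt_le_sqrt hle
        _ = _ := Real.sqrt_sq (by positivity)
    have hx : Real.sqrt 2 * Real.sqrt (∑ i, (tl d i) ^ 2) - (d 0 + d 1)
        ≤ 2 * Real.sqrt 2 * δ := by
      apply le_of_sq_le_sq' _ _ _ (by positivity)
      nlinarith [hsqrt2, hsC, sq_nonneg ((d 0 + d 1) + Real.sqrt 2 * Real.sqrt (∑ i, (tl d i) ^ 2)),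
        sq_nonneg (d 0 - d 1), hd2sum, hCeq, Real.sqrt_nonneg (∑ i, (tl d i) ^ 2), s2]
    have hl2 : lam2 v = v 0 + v 1 - Real.sqrt 2 * Real.sqrt (∑ i, (tl v i) ^ 2) := rfl
    have hmul := mul_le_mul_of_nonneg_left hroot s2
    have hmul2 := mul_le_mul_of_nonneg_left hx hα
    nlinarith [hlam2]
  obtain ⟨G, K, hG, hK, hb⟩ := core f f' f'' hd1 hd2 hdec
    (v 0 - v 1) (d 0 - d 1) (v 0 + v 1) (d 0 + d 1) (∑ i, (tl d i) ^ 2) m α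
    (fun t => Real.sqrt ((∑ i, (tl v i) ^ 2)
        + 2 * (∑ i, tl v i * tl d i) * t + (∑ i, (tl d i) ^ 2) * t ^ 2)) np npp
    (Real.sqrt_nonneg _) h1 h2 h3 h4 h5 hm hm1 hm2
  refine ⟨G, K, ?_, hK, ?_⟩
  · have hFun : (fun t : ℝ => Psi f (v + t • d)) = (fun t =>
        f ((v 0 - v 1) + (d 0 - d 1) * t)
        + (1/2) * f ((v 0 + v 1) + (d 0 + d 1) * t
            - Real.sqrt 2 * Real.sqrt ((∑ i, (tl v i) ^ 2)
                + 2 * (∑ i, tl v i * tl d i) * t + (∑ i, (tl d i) ^ 2) * t ^ 2))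
        + (1/2) * f ((v 0 + v 1) + (d 0 + d 1) * t
            + Real.sqrt 2 * Real.sqrt ((∑ i, (tl v i) ^ 2)
                + 2 * (∑ i, tl v i * tl d i) * t + (∑ i, (tl d i) ^ 2) * t ^ 2))) :=
      funext fun t => psi_line f v d t
    rw [hFun]
    exact hG
  · have hco : (d 0 - d 1) ^ 2 + (d 0 + d 1) ^ 2 + 2 * (∑ i, (tl d i) ^ 2)
        = 2 * ∑ i, d i ^ 2 := by rw [← hCeq]; ring
    calc K ≤ ((d 0 - d 1) ^ 2 + (d 0 + d 1) ^ 2 + 2 * (∑ i, (tl d i) ^ 2)) * f'' m := hb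
      _ = (2 * ∑ i, d i ^ 2) * f'' m := by rw [hco]

/-- with `ψ` twice continuously differentiable on `(0,∞)`,
`ψ'' > 0` and `ψ''` monotonically decreasing there, block vectors
`v, d_x, d_s` with `Σⱼ⟨d_xʲ, d_sʲ⟩ = 0` and `d_xʲ + d_sʲ = -ψ'(vʲ)`,
and `α ≥ 0` with `λ_min(v) - 2√2 α δ(v) > 0` and nonzero tails at `α`,
the function `f₁` is twice differentiable at `α` with
`f₁''(α) ≤ 2 δ(v)² ψ''(λ_min(v) - 2√2 α δ(v))`. -/
theorem stmt14 (f f' f'' : ℝ → ℝ)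
    (hd1 : ∀ t > (0 : ℝ), HasDerivAt f (f' t) t)
    (hd2 : ∀ t > (0 : ℝ), HasDerivAt f' (f'' t) t)
    (hcont : ContinuousOn f'' (Set.Ioi 0))
    (hpos : ∀ t > (0 : ℝ), 0 < f'' t)
    (hdec : AntitoneOn f'' (Set.Ioi 0))
    (N : ℕ) (hN : 1 ≤ N) (nf : Fin N → ℕ)
    (v dx ds : ∀ j : Fin N, Fin (nf j + 2) → ℝ)
    (hv : ∀ j, inConeInt (v j))
    (horth : ∑ j, dotp (dx j) (ds j) = 0)
    (hdir : ∀ j, dx j + ds j = -specVec f' (v j))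
    (α : ℝ) (hα : 0 ≤ α)
    (hlm : 0 < lamMin v - 2 * Real.sqrt 2 * α * deltaBlk f' v)
    (htail : ∀ j, 1 ≤ nf j →
      tl (v j + α • dx j) ≠ 0 ∧ tl (v j + α • ds j) ≠ 0) :
    let f1 : ℝ → ℝ := fun t =>
      (∑ j, ((1 / 2) * Psi f (v j + t • dx j) + (1 / 2) * Psi f (v j + t • ds j)))
        - ∑ j, Psi f (v j)
    DifferentiableAt ℝ f1 α ∧ DifferentiableAt ℝ (deriv f1) α ∧
      deriv (deriv f1) α ≤
        2 * (deltaBlk f' v) ^ 2 * f'' (lamMin v - 2 * Real.sqrt 2 * α * deltaBlk f' v) := by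
  intro f1
  classical
  haveI : Nonempty (Fin N) := ⟨⟨0, hN⟩⟩
  set δ := deltaBlk f' v with hδdef
  set m := lamMin v - 2 * Real.sqrt 2 * α * δ with hmdef
  have hδ0 : 0 ≤ δ := by rw [hδdef, deltaBlk]; positivity
  have hm : 0 < m := hlm
  have hS : ∑ j, ((∑ i, dx j i ^ 2) + (∑ i, ds j i ^ 2)) = 2 * δ ^ 2 := by
    have hblock : ∀ j, (enorm' (specVec f' (v j))) ^ 2
        = (∑ i, dx j i ^ 2) + (∑ i, ds j i ^ 2) + 2 * dotp (dx j) (ds j) := by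
      intro j
      rw [enorm', Real.sq_sqrt (Finset.sum_nonneg fun i _ => sq_nonneg _)]
      have hsp : ∀ i, specVec f' (v j) i = -(dx j i + ds j i) := by
        intro i
        have h := congrFun (hdir j) i
        simp only [Pi.add_apply, Pi.neg_apply] at h
        linarith
      rw [Finset.sum_congr rfl fun i _ => by rw [hsp i], dotp]
      rw [Finset.sum_congr rfl (fun i (_ : i ∈ Finset.univ) =>
        (by ring : (-(dx j i + ds j i)) ^ 2 = dx j i ^ 2 + ds j i ^ 2 + 2 * (dx j i * ds j i)))]
      rw [Finset.sum_add_distrib, Finset.sum_add_distrib, ← Finset.mul_sum]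
    have hsum : ∑ j, (enorm' (specVec f' (v j))) ^ 2
        = ∑ j, ((∑ i, dx j i ^ 2) + (∑ i, ds j i ^ 2)) := by
      rw [Finset.sum_congr rfl fun j _ => hblock j, Finset.sum_add_distrib, ← Finset.mul_sum]
      have horth' : ∑ j, dotp (dx j) (ds j) = 0 := horth
      rw [horth']
      ring
    have hδsq : δ ^ 2 = (1/2) * ∑ j, (enorm' (specVec f' (v j))) ^ 2 := by
      rw [hδdef, deltaBlk, mul_pow, Real.sq_sqrt (Finset.sum_nonneg fun j _ => sq_nonneg _),
        div_pow, one_pow, Real.sq_sqrt (by norm_num : (0:ℝ) ≤ 2)]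
    rw [← hsum, hδsq]; ring
  have hlamle : ∀ j, lamMin v ≤ lam1 (v j) ∧ lamMin v ≤ lam2 (v j) := by
    intro j
    have h : lamMin v ≤ min (lam1 (v j)) (lam2 (v j)) :=
      ciInf_le (Set.Finite.bddBelow (Set.finite_range _)) j
    exact ⟨h.trans (min_le_left _ _), h.trans (min_le_right _ _)⟩
  have hsumnn : ∀ j, (0:ℝ) ≤ (∑ i, dx j i ^ 2) + (∑ i, ds j i ^ 2) := by
    intro j; positivity
  have hdxsum : ∀ j, ∑ i, dx j i ^ 2 ≤ 2 * δ ^ 2 := by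
    intro j
    have h := Finset.single_le_sum (f := fun j => (∑ i, dx j i ^ 2) + (∑ i, ds j i ^ 2))
      (fun j _ => hsumnn j) (Finset.mem_univ j)
    rw [hS] at h
    have : (0:ℝ) ≤ ∑ i, ds j i ^ 2 := by positivity
    linarith
  have hdssum : ∀ j, ∑ i, ds j i ^ 2 ≤ 2 * δ ^ 2 := by
    intro j
    have h := Finset.single_le_sum (f := fun j => (∑ i, dx j i ^ 2) + (∑ i, ds j i ^ 2))
      (fun j _ => hsumnn j) (Finset.mem_univ j)
    rw [hS] at h
    have : (0:ℝ) ≤ ∑ i, dx j i ^ 2 := by positivity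
    linarith
  have hlam1' : ∀ j, m + 2 * Real.sqrt 2 * α * δ ≤ lam1 (v j) := by
    intro j; have := (hlamle j).1; rw [hmdef]; linarith
  have hlam2' : ∀ j, m + 2 * Real.sqrt 2 * α * δ ≤ lam2 (v j) := by
    intro j; have := (hlamle j).2; rw [hmdef]; linarith
  have pkgx : ∀ j, ∃ G K, (∀ᶠ t in nhds α,
        HasDerivAt (fun t => Psi f (v j + t • dx j)) (G t) t)
      ∧ HasDerivAt G K α ∧ K ≤ (2 * ∑ i, dx j i ^ 2) * f'' m := by
    intro j
    refine block_pkg f f' f'' hd1 hd2 hdec (v j) (dx j) α m δ hα hδ0 hm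
      (hlam1' j) (hlam2' j) (hdxsum j) ?_
    rcases Nat.eq_zero_or_pos (nf j) with h | h
    · exact Or.inl h
    · exact Or.inr (htail j h).1
  have pkgs : ∀ j, ∃ G K, (∀ᶠ t in nhds α,
        HasDerivAt (fun t => Psi f (v j + t • ds j)) (G t) t)
      ∧ HasDerivAt G K α ∧ K ≤ (2 * ∑ i, ds j i ^ 2) * f'' m := by
    intro j
    refine block_pkg f f' f'' hd1 hd2 hdec (v j) (ds j) α m δ hα hδ0 hm
      (hlam1' j) (hlam2' j) (hdssum j) ?_
    rcases Nat.eq_zero_or_pos (nf j) with h | h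
    · exact Or.inl h
    · exact Or.inr (htail j h).2
  choose Gx Kx hGx hKx hbx using pkgx
  choose Gs Ks hGs hKs hbs using pkgs
  set Gtot : ℝ → ℝ := fun t => ∑ j, ((1/2) * Gx j t + (1/2) * Gs j t) with hGtdef
  have hEv : ∀ᶠ t in nhds α, HasDerivAt f1 (Gtot t) t := by
    have hall : ∀ᶠ t in nhds α, ∀ j,
        HasDerivAt (fun t => Psi f (v j + t • dx j)) (Gx j t) t
        ∧ HasDerivAt (fun t => Psi f (v j + t • ds j)) (Gs j t) t :=
      Filter.eventually_all.2 fun j => (hGx j).and (hGs j)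
    filter_upwards [hall] with t ht
    have hsum : HasDerivAt (fun t => ∑ j,
          ((1/2) * Psi f (v j + t • dx j) + (1/2) * Psi f (v j + t • ds j)))
        (∑ j, ((1/2) * Gx j t + (1/2) * Gs j t)) t :=
      HasDerivAt.fun_sum fun j _ => ((ht j).1.const_mul _).add ((ht j).2.const_mul _)
    exact hsum.sub_const _
  have hGtot : HasDerivAt Gtot (∑ j, ((1/2) * Kx j + (1/2) * Ks j)) α :=
    HasDerivAt.fun_sum fun j _ => ((hKx j).const_mul _).add ((hKs j).const_mul _)
  have hEq : deriv f1 =ᶠ[nhds α] Gtot := by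
    filter_upwards [hEv] with t ht using ht.deriv
  refine ⟨(hEv.self_of_nhds).differentiableAt, ?_, ?_⟩
  · exact hGtot.differentiableAt.congr_of_eventuallyEq hEq
  · rw [hEq.deriv_eq, hGtot.deriv]
    calc ∑ j, ((1/2) * Kx j + (1/2) * Ks j)
        ≤ ∑ j, ((1/2) * ((2 * ∑ i, dx j i ^ 2) * f'' m)
            + (1/2) * ((2 * ∑ i, ds j i ^ 2) * f'' m)) :=
          Finset.sum_le_sum fun j _ => add_le_add
            (mul_le_mul_of_nonneg_left (hbx j) (by norm_num))
            (mul_le_mul_of_nonneg_left (hbs j) (by norm_num))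
      _ = (∑ j, ((∑ i, dx j i ^ 2) + (∑ i, ds j i ^ 2))) * f'' m := by
          rw [Finset.sum_mul]; exact Finset.sum_congr rfl fun j _ => by ring
      _ = 2 * δ ^ 2 * f'' m := by rw [hS]

end
end
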